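/- arXiv:2109.00464 — 5 statements merged into one kernel-verified Lean document; each statement's English description precedes it below -/
import Mathlib

section
/- There exists no strict 𝓕₀-identification function for the mode; that is, the mode is not identifiable relative to the class 𝓕₀ of strictly unimodal distributions with continuous Lebesgue density. -/
open MeasureTheory Set Filter

/-- `f` belongs to `𝓕₀` with mode `x₀`: continuous, nonnegative, integrates to 1,
nondecreasing on `(-∞, x₀]`, nonincreasing on `[x₀, ∞)`, and `x₀` is the unique
local (hence global) maximum. -/
def IsUnimodalDensity (f : ℝ → ℝ) (x₀ : ℝ) : Prop :=
  Continuous f ∧ (∀ y, 0 ≤ f y) ∧ (∫ y : ℝ, f y) = 1 ∧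
    MonotoneOn f (Set.Iic x₀) ∧ AntitoneOn f (Set.Ici x₀) ∧
    ∀ x, x ≠ x₀ → f x < f x₀

/-- `f` belongs to the class `𝓕₀` of strictly unimodal distributions with
continuous Lebesgue density. -/
def MemF0 (f : ℝ → ℝ) : Prop := ∃ x₀, IsUnimodalDensity f x₀

/-- `s` is a strictly `𝓕₀`-consistent scoring function for the mode. -/
def StrictlyF0Consistent (s : ℝ × ℝ → ℝ) : Prop :=
  Measurable s ∧
  (∀ x : ℝ, ∀ f : ℝ → ℝ, MemF0 f → Integrable (fun y => |s (x, y)| * f y)) ∧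
  (∀ f : ℝ → ℝ, ∀ t : ℝ, IsUnimodalDensity f t → ∀ x : ℝ,
    (∫ y : ℝ, s (t, y) * f y) ≤ (∫ y : ℝ, s (x, y) * f y) ∧
    ((∫ y : ℝ, s (t, y) * f y) = (∫ y : ℝ, s (x, y) * f y) → x = t))

/-- `v` is a strict `𝓕₀`-identification function for the mode. -/
def StrictF0Identification (v : ℝ × ℝ → ℝ) : Prop :=
  Measurable v ∧
  (∀ x : ℝ, ∀ f : ℝ → ℝ, MemF0 f → Integrable (fun y => |v (x, y)| * f y)) ∧
  (∀ f : ℝ → ℝ, ∀ t : ℝ, IsUnimodalDensity f t → ∀ x : ℝ,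
    (∫ y : ℝ, v (x, y) * f y) = 0 ↔ x = t)

/-!
An identification function makes the mode the zero of a functional that is linear in the
density, so if a mixture `a f + b g` with `b ≠ 0` has the same mode as `f`, then `g` has that
mode too. This fails for the equal mixture of the tent of height 1 at 0 with the flat tent of
height 1/2 at 1: the steep tent dominates the slope, and the mixture still peaks at 0.
-/

namespace IsUnimodalDensity

variable {f : ℝ → ℝ} {t : ℝ} (hf : IsUnimodalDensity f t)
include hf

lemma continuous : Continuous f := hf.1

lemma nonneg (y : ℝ) : 0 ≤ f y := hf.2.1 y

lemma integral_eq_one : ∫ y, f y = 1 := hf.2.2.1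

lemma monotoneOn : MonotoneOn f (Iic t) := hf.2.2.2.1

lemma antitoneOn : AntitoneOn f (Ici t) := hf.2.2.2.2.1

lemma lt_of_ne {x : ℝ} (hx : x ≠ t) : f x < f t := hf.2.2.2.2.2 x hx

lemma integrable : Integrable f :=
  .of_integral_ne_zero (by rw [hf.integral_eq_one]; exact one_ne_zero)

end IsUnimodalDensity

lemma integral_max_zero_one_sub_abs : ∫ y : ℝ, max 0 (1 - |y|) = 1 := by
  have hcont : Continuous fun y : ℝ => max 0 (1 - |y|) := by fun_prop
  have hsupp : Function.support (fun y : ℝ => max 0 (1 - |y|)) ⊆ Ioc (-1) 1 := by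
    intro y hy
    have : |y| < 1 := by
      by_contra! h
      exact hy (max_eq_left (by linarith))
    exact ⟨(abs_lt.mp this).1, (abs_lt.mp this).2.le⟩
  rw [← intervalIntegral.integral_eq_integral_of_support_subset hsupp,
    ← intervalIntegral.integral_add_adjacent_intervals (b := 0)
      (hcont.intervalIntegrable _ _) (hcont.intervalIntegrable _ _)]
  have hneg : ∫ y in (-1:ℝ)..0, max 0 (1 - |y|) = ∫ y in (-1:ℝ)..0, (1 + y) := by
    refine intervalIntegral.integral_congr fun y hy => ?_
    rw [uIcc_of_le (by norm_num)] at hy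
    rw [abs_of_nonpos hy.2, max_eq_right (by linarith [hy.1])]
    ring
  have hpos : ∫ y in (0:ℝ)..1, max 0 (1 - |y|) = ∫ y in (0:ℝ)..1, (1 - y) := by
    refine intervalIntegral.integral_congr fun y hy => ?_
    rw [uIcc_of_le (by norm_num)] at hy
    rw [abs_of_nonneg hy.1, max_eq_right (by linarith [hy.2])]
  rw [hneg, hpos,
    intervalIntegral.integral_add intervalIntegrable_const intervalIntegral.intervalIntegrable_id,
    intervalIntegral.integral_sub intervalIntegrable_const intervalIntegral.intervalIntegrable_id]
  norm_num

noncomputable def tent (c w : ℝ) (y : ℝ) : ℝ := max 0 (1 - |y - c| / w) / w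

section Tent

variable {c w : ℝ}

@[fun_prop]
lemma continuous_tent : Continuous (tent c w) := by
  unfold tent; fun_prop

lemma tent_nonneg (hw : 0 < w) (y : ℝ) : 0 ≤ tent c w y := by
  unfold tent; positivity

lemma tent_of_abs_sub_le (hw : 0 < w) {y : ℝ} (hy : |y - c| ≤ w) :
    tent c w y = (1 - |y - c| / w) / w := by
  rw [tent, max_eq_right (by rw [sub_nonneg, div_le_one hw]; exact hy)]

lemma integral_tent (hw : 0 < w) : ∫ y, tent c w y = 1 := by
  have h : ∀ y, tent c w y = w⁻¹ * max 0 (1 - |(y - c) / w|) := fun y => by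
    rw [tent, abs_div, abs_of_pos hw, div_eq_inv_mul]
  simp_rw [h]
  rw [integral_const_mul, integral_sub_right_eq_self (fun y => max 0 (1 - |y / w|)),
    Measure.integral_comp_div (fun y => max 0 (1 - |y|)), integral_max_zero_one_sub_abs,
    abs_of_pos hw, smul_eq_mul, mul_one, inv_mul_cancel₀ hw.ne']

lemma tent_le_tent_of_abs_sub_le (hw : 0 < w) {a b : ℝ} (h : |b - c| ≤ |a - c|) :
    tent c w a ≤ tent c w b := by
  unfold tent; gcongr

lemma tent_lt_tent_self (hw : 0 < w) {y : ℝ} (hy : y ≠ c) : tent c w y < tent c w c := by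
  have hyc : 0 < |y - c| := abs_pos.mpr (sub_ne_zero.mpr hy)
  unfold tent
  rw [sub_self, abs_zero, zero_div, sub_zero, max_eq_right zero_le_one]
  gcongr
  exact max_lt one_pos (by linarith [div_pos hyc hw])

lemma isUnimodalDensity_tent (hw : 0 < w) : IsUnimodalDensity (tent c w) c := by
  refine ⟨continuous_tent, tent_nonneg hw, integral_tent hw, ?_, ?_,
    fun y => tent_lt_tent_self hw⟩
  · intro a ha b hb hab
    apply tent_le_tent_of_abs_sub_le hw
    rw [abs_of_nonpos (sub_nonpos.2 hb), abs_of_nonpos (sub_nonpos.2 ha)]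
    linarith
  · intro a ha b hb hab
    apply tent_le_tent_of_abs_sub_le hw
    rw [abs_of_nonneg (sub_nonneg.2 ha), abs_of_nonneg (sub_nonneg.2 hb)]
    linarith

end Tent

lemma isUnimodalDensity_tent_mixture :
    IsUnimodalDensity (fun y => 2⁻¹ * tent 0 1 y + 2⁻¹ * tent 1 2 y) 0 := by
  set m := fun y => 2⁻¹ * tent 0 1 y + 2⁻¹ * tent 1 2 y with hm
  have hf : IsUnimodalDensity (tent 0 1) 0 := isUnimodalDensity_tent one_pos
  have hg : IsUnimodalDensity (tent 1 2) 1 := isUnimodalDensity_tent two_pos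
  have hm_Icc : ∀ y ∈ Icc (0 : ℝ) 1, m y = 5 / 8 - 3 / 8 * y := fun y ⟨h0, h1⟩ => by
    simp only [hm]
    rw [tent_of_abs_sub_le one_pos (by rw [sub_zero, abs_le]; constructor <;> linarith),
      tent_of_abs_sub_le two_pos (by rw [abs_le]; constructor <;> linarith),
      sub_zero, abs_of_nonneg h0, abs_of_nonpos (by linarith)]
    ring
  have hm_anti : AntitoneOn m (Ici 0) := by
    rw [← Icc_union_Ici_eq_Ici zero_le_one]
    refine AntitoneOn.union_right ?_ ?_ (isGreatest_Icc zero_le_one) isLeast_Ici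
    · intro a ha b hb hab
      rw [hm_Icc a ha, hm_Icc b hb]
      linarith
    · intro a ha b hb hab
      have := hf.antitoneOn (mem_Ici.2 (zero_le_one.trans ha))
        (mem_Ici.2 (zero_le_one.trans hb)) hab
      have := hg.antitoneOn ha hb hab
      simp only [hm]
      linarith
  refine ⟨by fun_prop, fun y => ?_, ?_, ?_, hm_anti, fun x hx => ?_⟩
  · have := hf.nonneg y
    have := hg.nonneg y
    positivity
  · rw [integral_add (hf.integrable.const_mul _) (hg.integrable.const_mul _), integral_const_mul,
      integral_const_mul, hf.integral_eq_one, hg.integral_eq_one]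
    norm_num
  · intro a ha b hb hab
    have := hf.monotoneOn ha hb hab
    have := hg.monotoneOn (mem_Iic.2 (ha.trans zero_le_one))
      (mem_Iic.2 (hb.trans zero_le_one)) hab
    simp only [hm]
    linarith
  · rcases hx.lt_or_gt with hneg | hpos
    · have := hf.lt_of_ne hx
      have := hg.monotoneOn (mem_Iic.2 (by linarith)) (mem_Iic.2 zero_le_one) hneg.le
      simp only [hm]
      linarith
    · calc m x ≤ m (min x 1) := hm_anti (le_min hpos.le zero_le_one) hpos.le (min_le_left _ _)
        _ < m 0 := by
          rw [hm_Icc _ ⟨le_min hpos.le zero_le_one, min_le_right _ _⟩,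
            hm_Icc _ ⟨le_rfl, zero_le_one⟩]
          linarith [lt_min hpos one_pos]

namespace StrictF0Identification

variable {v : ℝ × ℝ → ℝ} (hv : StrictF0Identification v)
include hv

lemma integral_mul_eq_zero_iff {f : ℝ → ℝ} {t : ℝ} (hf : IsUnimodalDensity f t) (x : ℝ) :
    ∫ y, v (x, y) * f y = 0 ↔ x = t :=
  hv.2.2 f t hf x

lemma integrable_mul (x : ℝ) {f : ℝ → ℝ} {t : ℝ} (hf : IsUnimodalDensity f t) :
    Integrable fun y => v (x, y) * f y := by
  refine (hv.2.1 x f ⟨t, hf⟩).mono' ?_ (ae_of_all _ fun y => ?_)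
  · exact ((hv.1.comp measurable_prodMk_left).mul hf.continuous.measurable).aestronglyMeasurable
  · rw [Real.norm_eq_abs, abs_mul, abs_of_nonneg (hf.nonneg y)]

lemma mode_eq_of_mixture {f g : ℝ → ℝ} {t s a b : ℝ} (hb : b ≠ 0)
    (hf : IsUnimodalDensity f t) (hg : IsUnimodalDensity g s)
    (hfg : IsUnimodalDensity (fun y => a * f y + b * g y) t) : s = t := by
  have hf0 : ∫ y, v (t, y) * f y = 0 := (hv.integral_mul_eq_zero_iff hf t).2 rfl
  have hfg0 : ∫ y, v (t, y) * (a * f y + b * g y) = 0 := (hv.integral_mul_eq_zero_iff hfg t).2 rfl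
  simp_rw [mul_add, mul_left_comm (v _) a, mul_left_comm (v _) b] at hfg0
  rw [integral_add ((hv.integrable_mul t hf).const_mul a) ((hv.integrable_mul t hg).const_mul b),
    integral_const_mul, integral_const_mul, hf0, mul_zero, zero_add] at hfg0
  exact ((hv.integral_mul_eq_zero_iff hg t).1 ((mul_eq_zero.1 hfg0).resolve_left hb)).symm

end StrictF0Identification

/-- The mode is not identifiable relative to the class 𝓕₀ of strictly unimodal
distributions with continuous Lebesgue density. -/
theorem mode_not_identifiable_F0 :
    ¬ ∃ v : ℝ × ℝ → ℝ, StrictF0Identification v := by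
  rintro ⟨v, hv⟩
  have h := hv.mode_eq_of_mixture (inv_ne_zero two_ne_zero) (isUnimodalDensity_tent one_pos)
    (isUnimodalDensity_tent two_pos) isUnimodalDensity_tent_mixture
  norm_num at h
end

section
/- Let s : ℝ × ℝ → ℝ be a strictly 𝓕₀-consistent scoring function for the mode, and let a < b be real numbers. Then for Lebesgue almost all pairs (x, y) ∈ ℝ × [a, b] (with respect to two-dimensional Lebesgue measure) it holds that s(x, y) = s(a, y)·𝟙{x < y} + s(b, y)·𝟙{x > y}. -/
open MeasureTheory Set Filter

/-!
Slices `s(x, ·)` are locally integrable, since `|s(x, ·)|` is integrable against the (positive)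
Cauchy density. For `t ∈ [y₁, y₂]`, a trapezoid that is flat on `[y₁, y₂]` plus a small spike at
`t` is, once normalized, a density in `𝓕₀` with mode `t`; shrinking slopes and spike, consistency
gives `∫_{y₁}^{y₂} s(t, y) dy ≤ ∫_{y₁}^{y₂} s(x, y) dy` for every `x`, so these integrals agree for
all `x, x' ∈ [y₁, y₂]`. Hence `u ↦ ∫_c^u (s(x, y) - s(x', y)) dy` vanishes for `u > max x x'` (with
`c = min x x'`) and for `u < min x x'` (with `c = max x x'`), and the Lebesgue differentiation
theorem gives `s(x, y) = s(x', y)` for almost every `y` outside `[x, x']`. Taking `x' = a` and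
`x' = b` and applying Fubini proves the claim.
-/

open Real Topology ProbabilityTheory

lemma isUnimodalDensity_cauchyPDFReal : IsUnimodalDensity (cauchyPDFReal 0 1) 0 := by
  have h (y : ℝ) : cauchyPDFReal 0 1 y = π⁻¹ * (y ^ 2 + 1)⁻¹ := by simp [cauchyPDFReal_def]
  have hanti : AntitoneOn (fun y : ℝ => π⁻¹ * (y ^ 2 + 1)⁻¹) (Ici 0) := fun u hu v _ huv => by
    have : u ^ 2 ≤ v ^ 2 := pow_le_pow_left₀ hu huv 2
    dsimp only
    gcongr
  refine ⟨?_, fun y => (cauchyPDF_pos 0 one_ne_zero y).le,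
    integral_cauchyPDFReal_eq_one 0 one_ne_zero, fun u hu v hv huv => ?_, ?_, fun x hx => ?_⟩
  · simp only [funext h]
    exact continuous_const.mul ((by fun_prop : Continuous fun y : ℝ => y ^ 2 + 1).inv₀
      fun y => by positivity)
  · simpa [h] using
      hanti (mem_Ici.2 (neg_nonneg.2 hv)) (mem_Ici.2 (neg_nonneg.2 hu)) (neg_le_neg huv)
  · simpa only [funext h] using hanti
  · have : 0 < x ^ 2 := by positivity
    rw [h, h]
    exact mul_lt_mul_of_pos_left (inv_strictAnti₀ (by positivity) (by simpa)) (by positivity)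

theorem StrictlyF0Consistent.locallyIntegrable_slice {s : ℝ × ℝ → ℝ} (hs : StrictlyF0Consistent s)
    (x : ℝ) : LocallyIntegrable (fun y => s (x, y)) := by
  have hpos := cauchyPDF_pos 0 one_ne_zero
  have hint : Integrable fun y => s (x, y) * cauchyPDFReal 0 1 y := by
    refine (hs.2.1 x _ ⟨0, isUnimodalDensity_cauchyPDFReal⟩).congr' ?_ ?_
    · exact ((hs.1.comp measurable_prodMk_left).mul
        (measurable_cauchyPDFReal 0 1)).aestronglyMeasurable
    · exact .of_forall fun y => by simp [abs_of_nonneg (hpos y).le]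
  have hinv : Continuous fun y => (cauchyPDFReal 0 1 y)⁻¹ :=
    isUnimodalDensity_cauchyPDFReal.1.inv₀ fun y => (hpos y).ne'
  refine (hint.locallyIntegrable.mul_continuous hinv).congr (.of_forall fun y => ?_)
  simp [mul_assoc, mul_inv_cancel₀ (hpos y).ne']

lemma isUnimodalDensity_div_integral {φ : ℝ → ℝ} {t : ℝ} (hc : Continuous φ) (h0 : 0 ≤ φ)
    (hI : 0 < ∫ y, φ y) (hmono : MonotoneOn φ (Iic t)) (hanti : AntitoneOn φ (Ici t))
    (hmax : ∀ x ≠ t, φ x < φ t) : IsUnimodalDensity (fun y => φ y / ∫ z, φ z) t :=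
  ⟨hc.div_const _, fun y => div_nonneg (h0 y) hI.le, by rw [integral_div, div_self hI.ne'],
    fun _ hu _ hv huv => div_le_div_of_nonneg_right (hmono hu hv huv) hI.le,
    fun _ hu _ hv huv => div_le_div_of_nonneg_right (hanti hu hv huv) hI.le,
    fun x hx => div_lt_div_of_pos_right (hmax x hx) hI⟩

theorem StrictlyF0Consistent.integral_mul_le {s : ℝ × ℝ → ℝ} (hs : StrictlyF0Consistent s)
    {φ : ℝ → ℝ} {t : ℝ} (hφ : IsUnimodalDensity (fun y => φ y / ∫ z, φ z) t)
    (hI : 0 < ∫ y, φ y) (x : ℝ) : ∫ y, s (t, y) * φ y ≤ ∫ y, s (x, y) * φ y := by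
  have h := (hs.2.2 _ t hφ x).1
  simp only [← mul_div_assoc, integral_div] at h
  exact (div_le_div_iff_of_pos_right hI).1 h

/-- The trapezoid equal to `1` on `[y₁, y₂]`, vanishing off `[y₁ - ε, y₂ + ε]` and linear in
between; `plateau t t ε` is the triangular spike of width `ε` at `t`. -/
noncomputable def plateau (y₁ y₂ ε y : ℝ) : ℝ := max 0 (min 1 (1 + min (y - y₁) (y₂ - y) / ε))

section Plateau

variable {y₁ y₂ ε y : ℝ}

lemma continuous_plateau : Continuous (plateau y₁ y₂ ε) := by
  unfold plateau; fun_prop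

lemma plateau_nonneg : 0 ≤ plateau y₁ y₂ ε y := le_max_left _ _

lemma plateau_le_one : plateau y₁ y₂ ε y ≤ 1 := max_le zero_le_one (min_le_left _ _)

lemma plateau_eq_one (hε : 0 ≤ ε) (hy : y ∈ Icc y₁ y₂) : plateau y₁ y₂ ε y = 1 := by
  have : 0 ≤ min (y - y₁) (y₂ - y) / ε :=
    div_nonneg (le_min (sub_nonneg.2 hy.1) (sub_nonneg.2 hy.2)) hε
  rw [plateau, min_eq_left (by linarith), max_eq_right zero_le_one]

lemma plateau_lt_one (hε : 0 < ε) (hy : y ∉ Icc y₁ y₂) : plateau y₁ y₂ ε y < 1 := by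
  have hneg : min (y - y₁) (y₂ - y) < 0 := by
    rw [mem_Icc, not_and_or, not_le, not_le] at hy
    rcases hy with hy | hy
    · exact min_lt_of_left_lt (by linarith)
    · exact min_lt_of_right_lt (by linarith)
  exact max_lt one_pos (min_lt_of_right_lt (by linarith [div_neg_of_neg_of_pos hneg hε]))

lemma plateau_eq_zero (hε : 0 < ε) (hy : y ∉ Icc (y₁ - ε) (y₂ + ε)) : plateau y₁ y₂ ε y = 0 := by
  have : min (y - y₁) (y₂ - y) ≤ -ε := by
    rw [mem_Icc, not_and_or, not_le, not_le] at hy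
    rcases hy with hy | hy
    · exact min_le_of_left_le (by linarith)
    · exact min_le_of_right_le (by linarith)
  have : min (y - y₁) (y₂ - y) / ε ≤ -1 := by rwa [div_le_iff₀ hε, neg_one_mul]
  exact max_eq_left (min_le_of_right_le (by linarith))

lemma monotoneOn_plateau (hε : 0 ≤ ε) : MonotoneOn (plateau y₁ y₂ ε) (Iic y₂) := by
  intro u _ v hv huv
  refine max_le_max le_rfl ?_
  rcases le_total (v - y₁) (y₂ - v) with h | h
  · rw [min_eq_left h]
    gcongr
    exact min_le_of_left_le (by linarith)
  · have : 0 ≤ (y₂ - v) / ε := div_nonneg (by linarith [mem_Iic.1 hv]) hε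
    rw [min_eq_right h]
    exact le_min (min_le_left _ _) ((min_le_left _ _).trans (by linarith))

lemma antitoneOn_plateau (hε : 0 ≤ ε) : AntitoneOn (plateau y₁ y₂ ε) (Ici y₁) := by
  intro u hu v _ huv
  refine max_le_max le_rfl ?_
  rcases le_total (u - y₁) (y₂ - u) with h | h
  · have : 0 ≤ (u - y₁) / ε := div_nonneg (by linarith [mem_Ici.1 hu]) hε
    rw [min_eq_left h]
    exact le_min (min_le_left _ _) ((min_le_left _ _).trans (by linarith))
  · rw [min_eq_right h]
    gcongr
    exact min_le_of_right_le (by linarith)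

lemma tendsto_plateau (y₁ y₂ y : ℝ) :
    Tendsto (fun ε => plateau y₁ y₂ ε y) (𝓝[>] 0) (𝓝 ((Icc y₁ y₂).indicator 1 y)) := by
  by_cases hy : y ∈ Icc y₁ y₂
  · rw [indicator_of_mem hy]
    exact tendsto_const_nhds.congr' (eventually_nhdsWithin_of_forall fun ε hε =>
      (plateau_eq_one (le_of_lt hε) hy).symm)
  · have hneg : 0 < -min (y - y₁) (y₂ - y) := by
      rw [mem_Icc, not_and_or, not_le, not_le] at hy
      rcases hy with hy | hy
      · linarith [min_le_left (y - y₁) (y₂ - y)]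
      · linarith [min_le_right (y - y₁) (y₂ - y)]
    rw [indicator_of_notMem hy]
    refine tendsto_const_nhds.congr' ?_
    filter_upwards [Ioo_mem_nhdsGT hneg] with ε hε
    refine (plateau_eq_zero hε.1 fun hmem => ?_).symm
    have : -ε ≤ min (y - y₁) (y₂ - y) := le_min (by linarith [hmem.1]) (by linarith [hmem.2])
    linarith [hε.2]

end Plateau

noncomputable def bump (y₁ y₂ t ε y : ℝ) : ℝ := plateau y₁ y₂ ε y + plateau t t ε y

section Bump

variable {y₁ y₂ t ε : ℝ}

lemma continuous_bump : Continuous (bump y₁ y₂ t ε) :=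
  continuous_plateau.add continuous_plateau

lemma bump_nonneg (y : ℝ) : 0 ≤ bump y₁ y₂ t ε y := add_nonneg plateau_nonneg plateau_nonneg

lemma bump_le_two (y : ℝ) : bump y₁ y₂ t ε y ≤ 2 := by
  rw [bump]
  linarith [plateau_le_one (y₁ := y₁) (y₂ := y₂) (ε := ε) (y := y),
    plateau_le_one (y₁ := t) (y₂ := t) (ε := ε) (y := y)]

lemma bump_eq_zero (hε : 0 < ε) (ht : t ∈ Icc y₁ y₂) {y : ℝ}
    (hy : y ∉ Icc (y₁ - ε) (y₂ + ε)) : bump y₁ y₂ t ε y = 0 := by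
  have hsub : Icc (t - ε) (t + ε) ⊆ Icc (y₁ - ε) (y₂ + ε) :=
    Icc_subset_Icc (by linarith [ht.1]) (by linarith [ht.2])
  rw [bump, plateau_eq_zero hε hy, plateau_eq_zero hε fun h => hy (hsub h), add_zero]

lemma integral_bump_pos (hε : 0 < ε) (ht : t ∈ Icc y₁ y₂) : 0 < ∫ y, bump y₁ y₂ t ε y := by
  refine continuous_bump.integral_pos_of_hasCompactSupport_nonneg_nonzero
    (HasCompactSupport.intro isCompact_Icc fun y hy => bump_eq_zero hε ht hy) bump_nonneg
    (x := t) ?_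
  rw [bump, plateau_eq_one hε.le (left_mem_Icc.2 le_rfl)]
  linarith [plateau_nonneg (y₁ := y₁) (y₂ := y₂) (ε := ε) (y := t)]

lemma isUnimodalDensity_bump_div (hε : 0 < ε) (ht : t ∈ Icc y₁ y₂) :
    IsUnimodalDensity (fun y => bump y₁ y₂ t ε y / ∫ z, bump y₁ y₂ t ε z) t := by
  refine isUnimodalDensity_div_integral continuous_bump bump_nonneg (integral_bump_pos hε ht)
    (((monotoneOn_plateau hε.le).mono (Iic_subset_Iic.2 ht.2)).add (monotoneOn_plateau hε.le))
    (((antitoneOn_plateau hε.le).mono (Ici_subset_Ici.2 ht.1)).add (antitoneOn_plateau hε.le))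
    fun x hx => ?_
  have hspike : plateau t t ε x < 1 := plateau_lt_one hε (by simpa using hx)
  rw [bump, bump, plateau_eq_one hε.le ht, plateau_eq_one hε.le (left_mem_Icc.2 le_rfl)]
  linarith [plateau_le_one (y₁ := y₁) (y₂ := y₂) (ε := ε) (y := x)]

lemma tendsto_integral_mul_bump {g : ℝ → ℝ} (hg : LocallyIntegrable g) (ht : t ∈ Icc y₁ y₂) :
    Tendsto (fun ε => ∫ y, g y * bump y₁ y₂ t ε y) (𝓝[>] 0) (𝓝 (∫ y in Icc y₁ y₂, g y)) := by
  rw [← integral_indicator measurableSet_Icc]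
  refine tendsto_integral_filter_of_dominated_convergence
    ((Icc (y₁ - 1) (y₂ + 1)).indicator fun y => 2 * ‖g y‖)
    (.of_forall fun ε => hg.aestronglyMeasurable.mul continuous_bump.aestronglyMeasurable) ?_
    ?_ ?_
  · filter_upwards [Ioo_mem_nhdsGT one_pos] with ε hε
    refine .of_forall fun y => ?_
    by_cases hy : y ∈ Icc (y₁ - 1) (y₂ + 1)
    · rw [indicator_of_mem hy, norm_mul, Real.norm_of_nonneg (bump_nonneg y), mul_comm]
      gcongr
      exact bump_le_two y
    · have hy' : y ∉ Icc (y₁ - ε) (y₂ + ε) := fun h =>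
        hy (Icc_subset_Icc (by linarith [hε.2]) (by linarith [hε.2]) h)
      rw [indicator_of_notMem hy, bump_eq_zero hε.1 ht hy', mul_zero, norm_zero]
  · exact ((integrable_indicator_iff measurableSet_Icc).2
      ((hg.integrableOn_isCompact isCompact_Icc).norm.const_mul 2))
  · filter_upwards [volume.ae_ne t] with y hy
    have hlim := ((tendsto_plateau y₁ y₂ y).add (tendsto_plateau t t y)).const_mul (g y)
    simpa [bump, indicator_apply, hy] using hlim

theorem StrictlyF0Consistent.setIntegral_slice_le {s : ℝ × ℝ → ℝ} (hs : StrictlyF0Consistent s)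
    {y₁ y₂ t : ℝ} (ht : t ∈ Icc y₁ y₂) (x : ℝ) :
    ∫ y in Icc y₁ y₂, s (t, y) ≤ ∫ y in Icc y₁ y₂, s (x, y) :=
  le_of_tendsto_of_tendsto (tendsto_integral_mul_bump (hs.locallyIntegrable_slice t) ht)
    (tendsto_integral_mul_bump (hs.locallyIntegrable_slice x) ht)
    (eventually_nhdsWithin_of_forall fun _ hε =>
      hs.integral_mul_le (isUnimodalDensity_bump_div hε ht) (integral_bump_pos hε ht) x)

theorem StrictlyF0Consistent.intervalIntegral_slice_eq {s : ℝ × ℝ → ℝ}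
    (hs : StrictlyF0Consistent s) {y₁ y₂ x x' : ℝ} (hx : x ∈ uIcc y₁ y₂) (hx' : x' ∈ uIcc y₁ y₂) :
    ∫ y in y₁..y₂, s (x, y) = ∫ y in y₁..y₂, s (x', y) := by
  wlog h : y₁ ≤ y₂ generalizing y₁ y₂
  · rw [uIcc_comm] at hx hx'
    rw [intervalIntegral.integral_symm, this hx hx' (le_of_not_ge h),
      intervalIntegral.integral_symm y₂ y₁]
  rw [uIcc_of_le h] at hx hx'
  simp only [intervalIntegral.integral_of_le h, ← integral_Icc_eq_integral_Ioc]
  exact le_antisymm (hs.setIntegral_slice_le hx x') (hs.setIntegral_slice_le hx' x)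

theorem ae_eq_zero_of_intervalIntegral_eq_zero {E : Type*} [NormedAddCommGroup E]
    [NormedSpace ℝ E] [CompleteSpace E] {f : ℝ → E} (hf : LocallyIntegrable f) {U : Set ℝ}
    (hU : IsOpen U) (c : ℝ) (h0 : ∀ u ∈ U, ∫ t in c..u, f t = 0) : ∀ᵐ x, x ∈ U → f x = 0 := by
  filter_upwards [LocallyIntegrable.ae_hasDerivAt_integral hf] with x hx hxU
  exact (hx c).unique
    ((hasDerivAt_const x 0).congr_of_eventuallyEq (eventually_of_mem (hU.mem_nhds hxU) h0))

theorem StrictlyF0Consistent.ae_slice_eq {s : ℝ × ℝ → ℝ} (hs : StrictlyF0Consistent s)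
    (x x' : ℝ) : ∀ᵐ y, y ∉ uIcc x x' → s (x, y) = s (x', y) := by
  have hint (z c u : ℝ) : IntervalIntegrable (fun y => s (z, y)) volume c u :=
    ((hs.locallyIntegrable_slice z).integrableOn_isCompact isCompact_uIcc).intervalIntegrable
  have hzero {c u : ℝ} (hx : x ∈ uIcc c u) (hx' : x' ∈ uIcc c u) :
      ∫ y in c..u, (s (x, y) - s (x', y)) = 0 := by
    rw [intervalIntegral.integral_sub (hint x c u) (hint x' c u),
      hs.intervalIntegral_slice_eq hx hx', sub_self]
  have hdiff : LocallyIntegrable fun y => s (x, y) - s (x', y) :=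
    (hs.locallyIntegrable_slice x).sub (hs.locallyIntegrable_slice x')
  have hright := ae_eq_zero_of_intervalIntegral_eq_zero hdiff isOpen_Ioi (x ⊓ x') fun u hu => by
    have hle : x ⊓ x' ≤ u := inf_le_sup.trans (le_of_lt hu)
    exact hzero (uIcc_of_le hle ▸ ⟨inf_le_left, le_sup_left.trans hu.le⟩)
      (uIcc_of_le hle ▸ ⟨inf_le_right, le_sup_right.trans hu.le⟩)
  have hleft := ae_eq_zero_of_intervalIntegral_eq_zero hdiff isOpen_Iio (x ⊔ x') fun u hu => by
    have hle : u ≤ x ⊔ x' := (le_of_lt hu).trans inf_le_sup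
    exact hzero (uIcc_of_ge hle ▸ ⟨hu.le.trans inf_le_left, le_sup_left⟩)
      (uIcc_of_ge hle ▸ ⟨hu.le.trans inf_le_right, le_sup_right⟩)
  filter_upwards [hright, hleft] with y hr hl hy
  rw [uIcc, mem_Icc, not_and_or, not_le, not_le] at hy
  exact sub_eq_zero.1 (hy.elim hl hr)

theorem score_ae_piecewise_general (s : ℝ × ℝ → ℝ) (hs : StrictlyF0Consistent s)
    (a b : ℝ) :
    ∀ᵐ p : ℝ × ℝ, p.2 ∈ Set.Icc a b →
      s p = s (a, p.2) * (if p.1 < p.2 then 1 else 0)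
          + s (b, p.2) * (if p.2 < p.1 then 1 else 0) := by
  rw [Measure.volume_eq_prod, Measure.ae_prod_iff_ae_ae]
  · refine .of_forall fun x => ?_
    filter_upwards [hs.ae_slice_eq x a, hs.ae_slice_eq x b, volume.ae_ne x, volume.ae_ne a,
      volume.ae_ne b] with y hxa hxb hx ha hb hy
    rcases hx.lt_or_gt with hyx | hxy
    · simp only [if_neg hyx.not_gt, if_pos hyx, mul_zero, mul_one, zero_add]
      exact hxb (notMem_uIcc_of_lt hyx (lt_of_le_of_ne hy.2 hb))
    · simp only [if_pos hxy, if_neg hxy.not_gt, mul_zero, mul_one, add_zero]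
      exact hxa (notMem_uIcc_of_gt hxy (lt_of_le_of_ne hy.1 (Ne.symm ha)))
  · have hslice (z : ℝ) : Measurable fun p : ℝ × ℝ => s (z, p.2) :=
      hs.1.comp (measurable_const.prodMk measurable_snd)
    refine (measurable_snd measurableSet_Icc).imp (measurableSet_eq_fun hs.1 ?_)
    exact ((hslice a).mul (Measurable.ite (measurableSet_lt measurable_fst measurable_snd)
      measurable_const measurable_const)).add ((hslice b).mul (Measurable.ite
      (measurableSet_lt measurable_snd measurable_fst) measurable_const measurable_const))

/-- Lemma 2: if `s` is strictly 𝓕₀-consistent for the mode and `a < b`, then for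
Lebesgue almost all pairs `(x, y)` with `y ∈ [a, b]` (w.r.t. two-dimensional
Lebesgue measure) it holds that `s(x, y) = s(a, y)·𝟙{x < y} + s(b, y)·𝟙{x > y}`. -/
theorem score_ae_piecewise (s : ℝ × ℝ → ℝ) (hs : StrictlyF0Consistent s)
    (a b : ℝ) (hab : a < b) :
    ∀ᵐ p : ℝ × ℝ, p.2 ∈ Set.Icc a b →
      s p = s (a, p.2) * (if p.1 < p.2 then 1 else 0)
          + s (b, p.2) * (if p.2 < p.1 then 1 else 0) :=
  score_ae_piecewise_general s hs a b
end Bump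
end

section
/- Let s : ℝ × ℝ → ℝ be a strictly 𝓕₀-consistent scoring function for the mode, and let a < b be real numbers. Then s(a, y) = s(b, y) for Lebesgue almost all y ∈ (a, b). -/
open MeasureTheory Set Filter

open Topology ProbabilityTheory

/-!
Mixing a small multiple of a Gaussian centred at `u` into a density that is merely weakly
unimodal around `u` produces a member of `𝓕₀` with mode `u`; letting the weight of the Gaussian
tend to zero shows that `u` still minimises the expected score. A trapezoidal density whose
plateau `[α, β]` contains both `u` and `v` is weakly unimodal around each of them, so it gives
the same expected score at `u` and at `v`; shrinking its flanks yields
`∫_α^β (s(u, y) - s(v, y)) dy = 0` whenever `u, v ∈ [α, β]`. Splitting `[a, c]` for `c ∈ (a, b)`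
gives `∫_a^c (s(a, y) - s(b, y)) dy = 0`, and the Lebesgue differentiation theorem turns this into
`s(a, ·) = s(b, ·)` almost everywhere on `(a, b)`.
-/

theorem MeasureTheory.LocallyIntegrable.of_integrable_mul {X : Type*} [TopologicalSpace X]
    [MeasurableSpace X] [OpensMeasurableSpace X] [LocallyCompactSpace X] [T2Space X]
    {μ : Measure X} {f w : X → ℝ}
    (h : Integrable (fun y => f y * w y) μ) (hw : Continuous w) (hw₀ : ∀ y, w y ≠ 0) :
    LocallyIntegrable f μ := by
  simpa [mul_assoc, mul_inv_cancel₀ (hw₀ _)] using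
    h.locallyIntegrable.mul_continuous (hw.inv₀ hw₀)

theorem MeasureTheory.ae_eq_zero_of_intervalIntegral_eq_zero {E : Type*} [NormedAddCommGroup E]
    [NormedSpace ℝ E] [CompleteSpace E] {g : ℝ → E} {a b : ℝ} (hg : LocallyIntegrable g)
    (h : ∀ x ∈ Ioo a b, ∫ y in a..x, g y = 0) : ∀ᵐ x, x ∈ Ioo a b → g x = 0 := by
  filter_upwards [_root_.LocallyIntegrable.ae_hasDerivAt_integral hg] with x hx hxab
  exact (hx a).unique <| (hasDerivAt_const x 0).congr_of_eventuallyEq <|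
    eventually_of_mem (Ioo_mem_nhds hxab.1 hxab.2) h

structure IsWeaklyUnimodalDensity (f : ℝ → ℝ) (m : ℝ) : Prop where
  continuous : Continuous f
  nonneg : ∀ y, 0 ≤ f y
  integral_eq_one : ∫ y, f y = 1
  monotoneOn : MonotoneOn f (Iic m)
  antitoneOn : AntitoneOn f (Ici m)

namespace IsWeaklyUnimodalDensity

variable {f g : ℝ → ℝ} {m : ℝ}

theorem of_isUnimodalDensity (hg : IsUnimodalDensity g m) : IsWeaklyUnimodalDensity g m :=
  ⟨hg.1, hg.2.1, hg.2.2.1, hg.2.2.2.1, hg.2.2.2.2.1⟩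

theorem integrable (hf : IsWeaklyUnimodalDensity f m) : Integrable f :=
  .of_integral_ne_zero (hf.integral_eq_one ▸ one_ne_zero)

theorem apply_le_apply_mode (hf : IsWeaklyUnimodalDensity f m) (x : ℝ) : f x ≤ f m := by
  rcases le_total x m with h | h
  · exact hf.monotoneOn h self_mem_Iic h
  · exact hf.antitoneOn self_mem_Ici h h

theorem isUnimodalDensity_mix (hf : IsWeaklyUnimodalDensity f m) (hg : IsUnimodalDensity g m)
    {δ : ℝ} (hδ₀ : 0 < δ) (hδ₁ : δ ≤ 1) :
    IsUnimodalDensity (fun y => (1 - δ) * f y + δ * g y) m := by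
  have hg' := of_isUnimodalDensity hg
  have h1δ : 0 ≤ 1 - δ := sub_nonneg.2 hδ₁
  refine ⟨by have := hf.continuous; have := hg'.continuous; fun_prop,
    fun y => by have := hf.nonneg y; have := hg'.nonneg y; positivity, ?_,
    fun x hx y hy hxy => ?_, fun x hx y hy hxy => ?_, fun x hx => ?_⟩
  · rw [integral_add (hf.integrable.const_mul _) (hg'.integrable.const_mul _), integral_const_mul,
      integral_const_mul, hf.integral_eq_one, hg'.integral_eq_one]
    ring
  · dsimp only
    gcongr
    exacts [hf.monotoneOn hx hy hxy, hg'.monotoneOn hx hy hxy]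
  · dsimp only
    gcongr
    exacts [hf.antitoneOn hx hy hxy, hg'.antitoneOn hx hy hxy]
  · have := hf.apply_le_apply_mode x
    dsimp only
    exact add_lt_add_of_le_of_lt (by gcongr) (by gcongr; exact hg.2.2.2.2.2 x hx)

end IsWeaklyUnimodalDensity

theorem isUnimodalDensity_gaussianPDFReal (m : ℝ) : IsUnimodalDensity (gaussianPDFReal m 1) m := by
  have hle : ∀ x y, (y - m) ^ 2 ≤ (x - m) ^ 2 → gaussianPDFReal m 1 x ≤ gaussianPDFReal m 1 y := by
    intro x y h
    simp only [gaussianPDFReal]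
    gcongr
  refine ⟨by unfold gaussianPDFReal; fun_prop, gaussianPDFReal_nonneg m 1,
    integral_gaussianPDFReal_eq_one m one_ne_zero,
    fun x _ y hy hxy => hle x y (by nlinarith [mem_Iic.1 hy]),
    fun x hx y _ hxy => hle y x (by nlinarith [mem_Ici.1 hx]), fun x hx => ?_⟩
  have : 0 < (x - m) ^ 2 := by have := sub_ne_zero.2 hx; positivity
  simp only [gaussianPDFReal, sub_self]
  gcongr _ * Real.exp ?_
  norm_num
  linarith

/-- Equal to `1` on `[α, β]`, linear on the flanks `[α - ε, α]` and `[β, β + ε]`, zero outside. -/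
noncomputable def trapezoid (α β ε y : ℝ) : ℝ :=
  max 0 (min 1 (min ((y - α) / ε + 1) ((β - y) / ε + 1)))

section Trapezoid

variable {α β ε : ℝ}

theorem trapezoid_nonneg (y : ℝ) : 0 ≤ trapezoid α β ε y := le_max_left _ _

theorem trapezoid_le_one (y : ℝ) : trapezoid α β ε y ≤ 1 :=
  max_le zero_le_one (min_le_left _ _)

theorem continuous_trapezoid : Continuous (trapezoid α β ε) := by
  unfold trapezoid
  fun_prop

theorem trapezoid_eq_one (hε : 0 ≤ ε) {y : ℝ} (hy : y ∈ Icc α β) : trapezoid α β ε y = 1 := by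
  have hL : 0 ≤ (y - α) / ε := div_nonneg (sub_nonneg.2 hy.1) hε
  have hR : 0 ≤ (β - y) / ε := div_nonneg (sub_nonneg.2 hy.2) hε
  rw [trapezoid, min_eq_left (le_min (by linarith) (by linarith)), max_eq_right zero_le_one]

theorem trapezoid_eq_zero (hε : 0 < ε) {y : ℝ} (hy : y ∉ Ioo (α - ε) (β + ε)) :
    trapezoid α β ε y = 0 := by
  refine max_eq_left (min_le_of_right_le ?_)
  rw [mem_Ioo, not_and_or, not_lt, not_lt] at hy
  rcases hy with h | h
  · have : (y - α) / ε ≤ -1 := by rw [div_le_iff₀ hε]; linarith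
    exact min_le_of_left_le (by linarith)
  · have : (β - y) / ε ≤ -1 := by rw [div_le_iff₀ hε]; linarith
    exact min_le_of_right_le (by linarith)

theorem hasCompactSupport_trapezoid (hε : 0 < ε) : HasCompactSupport (trapezoid α β ε) :=
  HasCompactSupport.intro (isCompact_Icc (a := α - ε) (b := β + ε)) fun _ hy =>
    trapezoid_eq_zero hε fun h => hy (Ioo_subset_Icc_self h)

theorem trapezoid_monotoneOn (hε : 0 ≤ ε) : MonotoneOn (trapezoid α β ε) (Iic β) := by
  intro x _ y hy hxy
  have hL : (x - α) / ε ≤ (y - α) / ε := by gcongr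
  have hR : 1 ≤ (β - y) / ε + 1 := le_add_of_nonneg_left (div_nonneg (sub_nonneg.2 hy) hε)
  refine max_le_max le_rfl (le_min (min_le_left _ _) (le_min ?_ ?_))
  · exact (min_le_right _ _).trans ((min_le_left _ _).trans (by linarith))
  · exact (min_le_left _ _).trans hR

theorem trapezoid_antitoneOn (hε : 0 ≤ ε) : AntitoneOn (trapezoid α β ε) (Ici α) := by
  intro x hx y _ hxy
  have hL : 1 ≤ (x - α) / ε + 1 := le_add_of_nonneg_left (div_nonneg (sub_nonneg.2 hx) hε)
  have hR : (β - y) / ε ≤ (β - x) / ε := by gcongr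
  refine max_le_max le_rfl (le_min (min_le_left _ _) (le_min ?_ ?_))
  · exact (min_le_left _ _).trans hL
  · exact (min_le_right _ _).trans ((min_le_right _ _).trans (by linarith))

theorem integral_trapezoid_pos (hε : 0 < ε) (hαβ : α ≤ β) : 0 < ∫ y, trapezoid α β ε y :=
  continuous_trapezoid.integral_pos_of_hasCompactSupport_nonneg_nonzero
    (hasCompactSupport_trapezoid hε) trapezoid_nonneg
    (x := α) (by rw [trapezoid_eq_one hε.le (left_mem_Icc.2 hαβ)]; exact one_ne_zero)

theorem isWeaklyUnimodalDensity_trapezoid (hε : 0 < ε) {m : ℝ} (hm : m ∈ Icc α β) :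
    IsWeaklyUnimodalDensity (fun y => trapezoid α β ε y / ∫ z, trapezoid α β ε z) m := by
  have hI := integral_trapezoid_pos hε (hm.1.trans hm.2)
  refine ⟨continuous_trapezoid.div_const _, fun y => div_nonneg (trapezoid_nonneg y) hI.le,
    by rw [integral_div, div_self hI.ne'], fun x hx y hy hxy => ?_, fun x hx y hy hxy => ?_⟩
  · exact div_le_div_of_nonneg_right
      (trapezoid_monotoneOn hε.le (Iic_subset_Iic.2 hm.2 hx) (Iic_subset_Iic.2 hm.2 hy) hxy) hI.le
  · exact div_le_div_of_nonneg_right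
      (trapezoid_antitoneOn hε.le (Ici_subset_Ici.2 hm.1 hx) (Ici_subset_Ici.2 hm.1 hy) hxy) hI.le

theorem tendsto_trapezoid (y : ℝ) :
    Tendsto (fun ε => trapezoid α β ε y) (𝓝[>] 0) (𝓝 ((Icc α β).indicator 1 y)) := by
  by_cases hy : y ∈ Icc α β
  · rw [indicator_of_mem hy]
    exact tendsto_const_nhds.congr' <| eventually_nhdsWithin_of_forall fun ε hε =>
      (trapezoid_eq_one (le_of_lt hε) hy).symm
  · rw [indicator_of_notMem hy]
    have hd : 0 < max (α - y) (y - β) := by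
      by_contra! h
      exact hy ⟨by linarith [le_max_left (α - y) (y - β)],
        by linarith [le_max_right (α - y) (y - β)]⟩
    refine tendsto_const_nhds.congr' ?_
    filter_upwards [Ioo_mem_nhdsGT hd] with ε hε
    refine (trapezoid_eq_zero hε.1 fun h => ?_).symm
    rcases lt_max_iff.1 hε.2 with h' | h' <;> linarith [h.1, h.2]

theorem tendsto_integral_mul_trapezoid {g : ℝ → ℝ} (hg : LocallyIntegrable g) :
    Tendsto (fun ε => ∫ y, g y * trapezoid α β ε y) (𝓝[>] 0) (𝓝 (∫ y in Icc α β, g y)) := by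
  rw [← integral_indicator measurableSet_Icc]
  refine tendsto_integral_filter_of_dominated_convergence
    ((Icc (α - 1) (β + 1)).indicator fun y => ‖g y‖)
    (Eventually.of_forall fun ε => hg.aestronglyMeasurable.mul
      continuous_trapezoid.aestronglyMeasurable) ?_
    (IntegrableOn.integrable_indicator (hg.integrableOn_isCompact isCompact_Icc).norm
      measurableSet_Icc)
    (ae_of_all _ fun y => ?_)
  · filter_upwards [Ioc_mem_nhdsGT one_pos] with ε hε
    refine ae_of_all _ fun y => ?_
    by_cases hy : y ∈ Icc (α - 1) (β + 1)
    · rw [indicator_of_mem hy, norm_mul, Real.norm_of_nonneg (trapezoid_nonneg y)]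
      exact mul_le_of_le_one_right (norm_nonneg _) (trapezoid_le_one y)
    · have hsub : Ioo (α - ε) (β + ε) ⊆ Icc (α - 1) (β + 1) :=
        Ioo_subset_Icc_self.trans (Icc_subset_Icc (by linarith [hε.2]) (by linarith [hε.2]))
      rw [indicator_of_notMem hy, trapezoid_eq_zero hε.1 fun h => hy (hsub h), mul_zero,
        norm_zero]
  · by_cases hy : y ∈ Icc α β <;>
      simpa [hy] using (tendsto_trapezoid (α := α) (β := β) y).const_mul (g y)

end Trapezoid

namespace StrictlyF0Consistent

variable {s : ℝ × ℝ → ℝ}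

theorem measurable_score (hs : StrictlyF0Consistent s) (x : ℝ) : Measurable fun y => s (x, y) :=
  hs.1.comp measurable_prodMk_left

theorem integrable_score_mul (hs : StrictlyF0Consistent s) (x : ℝ) {f : ℝ → ℝ} (hf : MemF0 f) :
    Integrable fun y => s (x, y) * f y := by
  obtain ⟨m, hfm⟩ := hf
  refine (integrable_norm_iff ((hs.measurable_score x).mul hfm.1.measurable).aestronglyMeasurable).1
    ((hs.2.1 x f ⟨m, hfm⟩).congr (ae_of_all _ fun y => ?_))
  simp [abs_of_nonneg (hfm.2.1 y)]

theorem locallyIntegrable_score (hs : StrictlyF0Consistent s) (x : ℝ) :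
    LocallyIntegrable fun y => s (x, y) :=
  have hg := isUnimodalDensity_gaussianPDFReal 0
  .of_integrable_mul (hs.integrable_score_mul x ⟨0, hg⟩) hg.1
    fun y => (gaussianPDFReal_pos 0 1 y one_ne_zero).ne'

theorem integrable_score_mul_trapezoid (hs : StrictlyF0Consistent s) (x : ℝ) {α β ε : ℝ}
    (hε : 0 < ε) : Integrable fun y => s (x, y) * trapezoid α β ε y :=
  (hs.locallyIntegrable_score x).integrable_smul_right_of_hasCompactSupport
    continuous_trapezoid (hasCompactSupport_trapezoid hε)

theorem integral_score_mul_le (hs : StrictlyF0Consistent s) {f : ℝ → ℝ} {u : ℝ}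
    (hf : IsWeaklyUnimodalDensity f u) (hint : ∀ t, Integrable fun y => s (t, y) * f y) (x : ℝ) :
    ∫ y, s (u, y) * f y ≤ ∫ y, s (x, y) * f y := by
  obtain ⟨g, hg⟩ : ∃ g, IsUnimodalDensity g u := ⟨_, isUnimodalDensity_gaussianPDFReal u⟩
  have hmix : ∀ t δ, ∫ y, s (t, y) * ((1 - δ) * f y + δ * g y) =
      (1 - δ) * (∫ y, s (t, y) * f y) + δ * ∫ y, s (t, y) * g y := by
    intro t δ
    simp_rw [mul_add, mul_left_comm (s (t, _))]
    rw [integral_add ((hint t).const_mul _) ((hs.integrable_score_mul t ⟨u, hg⟩).const_mul _),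
      integral_const_mul, integral_const_mul]
  have hlim : ∀ t, Tendsto (fun δ => ∫ y, s (t, y) * ((1 - δ) * f y + δ * g y)) (𝓝[>] 0)
      (𝓝 (∫ y, s (t, y) * f y)) := by
    intro t
    simp_rw [hmix]
    exact (Continuous.tendsto' (by fun_prop) 0 _ (by simp)).mono_left nhdsWithin_le_nhds
  refine le_of_tendsto_of_tendsto (hlim u) (hlim x) ?_
  filter_upwards [Ioc_mem_nhdsGT one_pos] with δ hδ
  exact (hs.2.2 _ u (hf.isUnimodalDensity_mix hg hδ.1 hδ.2) x).1

theorem integral_score_mul_trapezoid_eq (hs : StrictlyF0Consistent s) {α β ε u v : ℝ}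
    (hε : 0 < ε) (hu : u ∈ Icc α β) (hv : v ∈ Icc α β) :
    ∫ y, s (u, y) * trapezoid α β ε y = ∫ y, s (v, y) * trapezoid α β ε y := by
  set I := ∫ z, trapezoid α β ε z
  have hint : ∀ t, Integrable fun y => s (t, y) * (trapezoid α β ε y / I) := fun t => by
    simpa only [mul_div_assoc] using (hs.integrable_score_mul_trapezoid t hε).div_const I
  have heq := le_antisymm
    (hs.integral_score_mul_le (isWeaklyUnimodalDensity_trapezoid hε hu) hint v)
    (hs.integral_score_mul_le (isWeaklyUnimodalDensity_trapezoid hε hv) hint u)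
  simp_rw [← mul_div_assoc, integral_div] at heq
  exact (div_left_inj' (integral_trapezoid_pos hε (hu.1.trans hu.2)).ne').1 heq

theorem intervalIntegral_score_sub_eq_zero (hs : StrictlyF0Consistent s) {α β u v : ℝ}
    (hu : u ∈ Icc α β) (hv : v ∈ Icc α β) : ∫ y in α..β, (s (u, y) - s (v, y)) = 0 := by
  rw [intervalIntegral.integral_of_le (hu.1.trans hu.2), ← integral_Icc_eq_integral_Ioc]
  refine tendsto_nhds_unique (tendsto_integral_mul_trapezoid
    ((hs.locallyIntegrable_score u).sub (hs.locallyIntegrable_score v))) ?_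
  refine tendsto_const_nhds.congr' (eventually_nhdsWithin_of_forall fun ε hε => ?_)
  simp_rw [sub_mul]
  rw [integral_sub (hs.integrable_score_mul_trapezoid u hε)
    (hs.integrable_score_mul_trapezoid v hε), hs.integral_score_mul_trapezoid_eq hε hu hv, sub_self]

theorem intervalIntegrable_score_sub (hs : StrictlyF0Consistent s) (u v p q : ℝ) :
    IntervalIntegrable (fun y => s (u, y) - s (v, y)) volume p q :=
  (((hs.locallyIntegrable_score u).sub (hs.locallyIntegrable_score v)).integrableOn_isCompact
    isCompact_uIcc).intervalIntegrable

theorem intervalIntegral_score_sub_eq_zero_of_mem (hs : StrictlyF0Consistent s) {a b c : ℝ}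
    (hc : c ∈ Icc a b) : ∫ y in a..c, (s (a, y) - s (b, y)) = 0 := by
  calc ∫ y in a..c, (s (a, y) - s (b, y))
      = (∫ y in a..c, (s (a, y) - s (c, y))) +
          ((∫ y in a..b, (s (c, y) - s (b, y))) - ∫ y in c..b, (s (c, y) - s (b, y))) := by
        rw [← intervalIntegral.integral_add_adjacent_intervals
          (hs.intervalIntegrable_score_sub c b a c) (hs.intervalIntegrable_score_sub c b c b),
          add_sub_cancel_right, ← intervalIntegral.integral_add
          (hs.intervalIntegrable_score_sub a c a c) (hs.intervalIntegrable_score_sub c b a c)]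
        simp only [sub_add_sub_cancel]
    _ = 0 := by
        rw [hs.intervalIntegral_score_sub_eq_zero (left_mem_Icc.2 hc.1) (right_mem_Icc.2 hc.1),
          hs.intervalIntegral_score_sub_eq_zero hc (right_mem_Icc.2 (hc.1.trans hc.2)),
          hs.intervalIntegral_score_sub_eq_zero (left_mem_Icc.2 hc.2) (right_mem_Icc.2 hc.2)]
        norm_num

end StrictlyF0Consistent

theorem score_ae_eq_on_interval_general (s : ℝ × ℝ → ℝ) (hs : StrictlyF0Consistent s)
    (a b : ℝ) :
    ∀ᵐ y : ℝ, y ∈ Set.Ioo a b → s (a, y) = s (b, y) := by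
  filter_upwards [ae_eq_zero_of_intervalIntegral_eq_zero
    ((hs.locallyIntegrable_score a).sub (hs.locallyIntegrable_score b))
    fun c hc => hs.intervalIntegral_score_sub_eq_zero_of_mem (Ioo_subset_Icc_self hc)]
    with y hy hyab
  exact sub_eq_zero.1 (hy hyab)

/-- Lemma 3: if `s` is strictly 𝓕₀-consistent for the mode and `a < b`, then
`s(a, y) = s(b, y)` for Lebesgue almost all `y ∈ (a, b)`. -/
theorem score_ae_eq_on_interval (s : ℝ × ℝ → ℝ) (hs : StrictlyF0Consistent s)
    (a b : ℝ) (hab : a < b) :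
    ∀ᵐ y : ℝ, y ∈ Set.Ioo a b → s (a, y) = s (b, y) :=
  score_ae_eq_on_interval_general s hs a b
end

section
/- Let v : ℝ × ℝ → ℝ be a strict 𝓕₀-identification function for the mode. Then for every x ∈ ℝ, v(x, y) = 0 for Lebesgue almost all y ∈ ℝ. -/
open MeasureTheory Set Filter

/-!
Fix `x` and put `g = v (x, ·)`. The Laplace density `f₀` centred at `x` is strictly unimodal
with mode `x`, with slope `± 2 f₀` on either side of `x`. Hence for a test function `φ`, once
`|ε φ|` and `|ε φ'|` are dominated by `f₀` (true for all small `ε`, as `f₀ > 0`), the normalised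
perturbation `f₀ + ε φ` is again strictly unimodal with mode `x`. Identification then gives
`∫ g f₀ + ε ∫ g φ = 0` for all small `ε`, so `∫ g φ = 0`. Since `|g| f₀` is integrable, `g` is
locally integrable, and a locally integrable function orthogonal to all test functions vanishes
almost everywhere.
-/

open Real Topology

noncomputable def laplaceDensity (x y : ℝ) : ℝ := exp (-2 * |y - x|)

lemma laplaceDensity_pos (x y : ℝ) : 0 < laplaceDensity x y := exp_pos _

lemma continuous_laplaceDensity (x : ℝ) : Continuous (laplaceDensity x) := by
  unfold laplaceDensity; fun_prop

lemma integral_laplaceDensity (x : ℝ) : ∫ y, laplaceDensity x y = 1 := by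
  simp only [laplaceDensity]
  rw [integral_sub_right_eq_self (fun y => exp (-2 * |y|)) x,
    integral_comp_abs (f := fun y => exp (-2 * y)), integral_exp_mul_Ioi (by norm_num)]
  norm_num

lemma integrable_laplaceDensity (x : ℝ) : Integrable (laplaceDensity x) :=
  .of_integral_ne_zero (by rw [integral_laplaceDensity]; exact one_ne_zero)

lemma hasDerivAt_laplaceDensity_of_lt {x y : ℝ} (hy : y < x) :
    HasDerivAt (laplaceDensity x) (2 * laplaceDensity x y) y := by
  have hexp : HasDerivAt (fun z => exp (2 * (z - x))) (2 * exp (2 * (y - x))) y := by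
    simpa [mul_comm] using (((hasDerivAt_id y).sub_const x).const_mul 2).exp
  have heq : laplaceDensity x =ᶠ[𝓝 y] fun z => exp (2 * (z - x)) := by
    filter_upwards [Iio_mem_nhds hy] with z hz
    rw [laplaceDensity, abs_of_neg (sub_neg.mpr hz)]; ring_nf
  rw [heq.eq_of_nhds]
  exact hexp.congr_of_eventuallyEq heq

lemma hasDerivAt_laplaceDensity_of_gt {x y : ℝ} (hy : x < y) :
    HasDerivAt (laplaceDensity x) (-2 * laplaceDensity x y) y := by
  have hexp : HasDerivAt (fun z => exp (2 * (x - z))) (-2 * exp (2 * (x - y))) y := by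
    simpa [mul_comm] using (((hasDerivAt_id y).const_sub x).const_mul 2).exp
  have heq : laplaceDensity x =ᶠ[𝓝 y] fun z => exp (2 * (x - z)) := by
    filter_upwards [Ioi_mem_nhds hy] with z hz
    rw [laplaceDensity, abs_of_pos (sub_pos.mpr hz)]; ring_nf
  rw [heq.eq_of_nhds]
  exact hexp.congr_of_eventuallyEq heq

lemma HasCompactSupport.exists_abs_le_mul {X : Type*} [TopologicalSpace X] {φ w : X → ℝ}
    (hs : HasCompactSupport φ) (hφ : Continuous φ) (hw : Continuous w) (hw0 : ∀ y, 0 < w y) :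
    ∃ C, ∀ y, |φ y| ≤ C * w y := by
  obtain ⟨C, hC⟩ := (hs.mul_right (f' := w⁻¹)).exists_bound_of_continuous
    (hφ.mul (hw.inv₀ fun y => (hw0 y).ne'))
  refine ⟨C, fun y => ?_⟩
  have hCy := hC y
  rwa [Pi.mul_apply, Pi.inv_apply, norm_mul, norm_inv, Real.norm_eq_abs, Real.norm_eq_abs,
    abs_of_pos (hw0 y), mul_inv_le_iff₀ (hw0 y)] at hCy

lemma HasCompactSupport.eventually_abs_mul_lt {X : Type*} [TopologicalSpace X] {φ w : X → ℝ}
    (hs : HasCompactSupport φ) (hφ : Continuous φ) (hw : Continuous w) (hw0 : ∀ y, 0 < w y) :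
    ∀ᶠ ε in 𝓝 (0 : ℝ), ∀ y, |ε * φ y| < w y := by
  obtain ⟨C, hC⟩ := hs.exists_abs_le_mul hφ hw hw0
  have hsmall : ∀ᶠ ε in 𝓝 (0 : ℝ), |ε| * C < 1 :=
    (continuous_abs.mul continuous_const).continuousAt.eventually_lt continuousAt_const
      (by simp)
  filter_upwards [hsmall] with ε hε y
  calc |ε * φ y| = |ε| * |φ y| := abs_mul ε (φ y)
    _ ≤ |ε| * (C * w y) := mul_le_mul_of_nonneg_left (hC y) (abs_nonneg ε)
    _ = |ε| * C * w y := by ring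
    _ < w y := by nlinarith [hw0 y]

lemma locallyIntegrable_of_integrable_mul {μ : Measure ℝ} {g w : ℝ → ℝ}
    (hgw : Integrable (fun y => g y * w y) μ) (hw : Continuous w) (hw0 : ∀ y, w y ≠ 0) :
    LocallyIntegrable g μ := by
  have hg : g = fun y => g y * w y * w⁻¹ y := funext fun y => by simp [hw0 y]
  rw [hg]
  exact hgw.locallyIntegrable.mul_continuous (hw.inv₀ hw0)

lemma isUnimodalDensity_div_integral_s10 {ψ : ℝ → ℝ} {x : ℝ} (hψ : Continuous ψ)
    (hψi : Integrable ψ) (hψ0 : ∀ y, 0 < ψ y) (hmono : StrictMonoOn ψ (Iic x))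
    (hanti : StrictAntiOn ψ (Ici x)) :
    IsUnimodalDensity (fun y => ψ y / ∫ z, ψ z) x := by
  have hN : 0 < ∫ z, ψ z := by
    rw [integral_pos_iff_support_of_nonneg (fun y => (hψ0 y).le) hψi,
      Function.support_eq_univ fun y => (hψ0 y).ne', Measure.measure_univ_pos]
    exact NeZero.ne _
  refine ⟨hψ.div_const _, fun y => div_nonneg (hψ0 y).le hN.le, ?_,
    fun a ha b hb hab => div_le_div_of_nonneg_right (hmono.monotoneOn ha hb hab) hN.le,
    fun a ha b hb hab => div_le_div_of_nonneg_right (hanti.antitoneOn ha hb hab) hN.le,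
    fun y hy => div_lt_div_of_pos_right ?_ hN⟩
  · rw [integral_div, div_self hN.ne']
  · rcases hy.lt_or_gt with hy | hy
    · exact hmono hy.le self_mem_Iic hy
    · exact hanti self_mem_Ici hy.le hy

section Perturbation

variable {x ε : ℝ} {φ : ℝ → ℝ}

lemma laplaceDensity_add_mul_pos (h : ∀ y, |ε * φ y| < laplaceDensity x y) (y : ℝ) :
    0 < laplaceDensity x y + ε * φ y := by
  linarith [neg_abs_le (ε * φ y), h y]

lemma strictMonoOn_laplaceDensity_add_mul (hφ : Differentiable ℝ φ)
    (h : ∀ y, |ε * deriv φ y| < laplaceDensity x y) :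
    StrictMonoOn (fun y => laplaceDensity x y + ε * φ y) (Iic x) := by
  refine strictMonoOn_of_deriv_pos (convex_Iic x)
    ((continuous_laplaceDensity x).add (continuous_const.mul hφ.continuous)).continuousOn
    fun y hy => ?_
  rw [interior_Iic] at hy
  have hψ' : HasDerivAt (fun y => laplaceDensity x y + ε * φ y)
      (2 * laplaceDensity x y + ε * deriv φ y) y :=
    (hasDerivAt_laplaceDensity_of_lt hy).add ((hφ y).hasDerivAt.const_mul ε)
  rw [hψ'.deriv]
  linarith [neg_abs_le (ε * deriv φ y), h y, laplaceDensity_pos x y]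

lemma strictAntiOn_laplaceDensity_add_mul (hφ : Differentiable ℝ φ)
    (h : ∀ y, |ε * deriv φ y| < laplaceDensity x y) :
    StrictAntiOn (fun y => laplaceDensity x y + ε * φ y) (Ici x) := by
  refine strictAntiOn_of_deriv_neg (convex_Ici x)
    ((continuous_laplaceDensity x).add (continuous_const.mul hφ.continuous)).continuousOn
    fun y hy => ?_
  rw [interior_Ici] at hy
  have hψ' : HasDerivAt (fun y => laplaceDensity x y + ε * φ y)
      (-2 * laplaceDensity x y + ε * deriv φ y) y :=
    (hasDerivAt_laplaceDensity_of_gt hy).add ((hφ y).hasDerivAt.const_mul ε)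
  rw [hψ'.deriv]
  linarith [le_abs_self (ε * deriv φ y), h y, laplaceDensity_pos x y]

end Perturbation

lemma eventually_isUnimodalDensity_laplaceDensity_add_mul (x : ℝ) {φ : ℝ → ℝ}
    (hφ : ContDiff ℝ 1 φ) (hφc : HasCompactSupport φ) :
    ∀ᶠ ε in 𝓝 0, IsUnimodalDensity (fun y => (laplaceDensity x y + ε * φ y) /
      ∫ z, (laplaceDensity x z + ε * φ z)) x := by
  have hd := hφ.differentiable one_ne_zero
  filter_upwards [hφc.eventually_abs_mul_lt hφ.continuous (continuous_laplaceDensity x)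
      (laplaceDensity_pos x),
    hφc.deriv.eventually_abs_mul_lt (hφ.continuous_deriv le_rfl) (continuous_laplaceDensity x)
      (laplaceDensity_pos x)] with ε h h'
  exact isUnimodalDensity_div_integral_s10
    ((continuous_laplaceDensity x).add (continuous_const.mul hφ.continuous))
    ((integrable_laplaceDensity x).add
      ((hφ.continuous.integrable_of_hasCompactSupport hφc).const_mul ε))
    (laplaceDensity_add_mul_pos h) (strictMonoOn_laplaceDensity_add_mul hd h')
    (strictAntiOn_laplaceDensity_add_mul hd h')

lemma isUnimodalDensity_laplaceDensity (x : ℝ) : IsUnimodalDensity (laplaceDensity x) x := by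
  simpa [integral_laplaceDensity] using (eventually_isUnimodalDensity_laplaceDensity_add_mul x
    (contDiff_const (c := (0 : ℝ))) HasCompactSupport.zero).self_of_nhds

lemma StrictF0Identification.integral_mul_eq_zero {v : ℝ × ℝ → ℝ}
    (hv : StrictF0Identification v) {x : ℝ} {ψ : ℝ → ℝ}
    (hψ : IsUnimodalDensity (fun y => ψ y / ∫ z, ψ z) x) :
    ∫ y, v (x, y) * ψ y = 0 := by
  have hN : ∫ z, ψ z ≠ 0 := fun h => by simpa [h] using hψ.2.2.1
  have h := (hv.2.2 _ x hψ x).mpr rfl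
  simp_rw [mul_div_assoc'] at h
  rwa [integral_div, div_eq_zero_iff, or_iff_left hN] at h

lemma StrictF0Identification.integrable_mul_laplaceDensity {v : ℝ × ℝ → ℝ}
    (hv : StrictF0Identification v) (x : ℝ) :
    Integrable (fun y => v (x, y) * laplaceDensity x y) := by
  refine (integrable_norm_iff ((hv.1.comp measurable_prodMk_left).mul
    (continuous_laplaceDensity x).measurable).aestronglyMeasurable).mp ?_
  simpa [abs_mul, abs_of_pos (laplaceDensity_pos x _)] using
    hv.2.1 x _ ⟨x, isUnimodalDensity_laplaceDensity x⟩

/-- If `v` is a strict 𝓕₀-identification function for the mode, then for every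
`x`, `v(x, y) = 0` for Lebesgue almost all `y`. -/
theorem identification_ae_zero (v : ℝ × ℝ → ℝ)
    (hv : StrictF0Identification v) :
    ∀ x : ℝ, ∀ᵐ y : ℝ, v (x, y) = 0 := by
  intro x
  set g := fun y => v (x, y)
  have hgw := hv.integrable_mul_laplaceDensity x
  have hg := locallyIntegrable_of_integrable_mul hgw (continuous_laplaceDensity x)
    fun y => (laplaceDensity_pos x y).ne'
  refine ae_eq_zero_of_integral_contDiff_smul_eq_zero hg fun φ hφ hφc => ?_
  have hgφ : Integrable (fun y => g y * φ y) :=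
    hg.integrable_smul_right_of_hasCompactSupport hφ.continuous hφc
  have hvanish : ∀ᶠ ε in 𝓝 (0 : ℝ),
      (∫ y, g y * laplaceDensity x y) + ε * ∫ y, g y * φ y = 0 := by
    filter_upwards [eventually_isUnimodalDensity_laplaceDensity_add_mul x
      (hφ.of_le (by exact_mod_cast le_top)) hφc] with ε hε
    rw [← integral_const_mul, ← integral_add hgw (hgφ.const_mul ε)]
    simpa only [mul_add, mul_left_comm] using hv.integral_mul_eq_zero hε
  have h0 : ∫ y, g y * laplaceDensity x y = 0 := by simpa using hvanish.self_of_nhds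
  obtain ⟨ε, hε, hε0⟩ :=
    ((hvanish.filter_mono (nhdsWithin_le_nhds (s := {0}ᶜ))).and self_mem_nhdsWithin).exists
  rw [h0, zero_add, mul_eq_zero] at hε
  simpa only [smul_eq_mul, mul_comm] using hε.resolve_left hε0
end

section
/- Let 𝓕₁ be the class of continuous, nonnegative probability densities f : ℝ → ℝ with ∫ f(y) dy = 1 that possess a unique global maximizer (called the mode of f); 𝓕₁ contains 𝓕₀. There exists no strict 𝓕₁-identification function for the mode; that is, the mode is not identifiable relative to the class of all continuous Lebesgue densities with unique global maximum. -/
open MeasureTheory Set Filter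

/-- `f` belongs to `𝓕₁` with mode `t`: continuous, nonnegative, integrates to 1,
and `t` is the unique global maximizer. -/
def IsF1Density (f : ℝ → ℝ) (t : ℝ) : Prop :=
  Continuous f ∧ (∀ y, 0 ≤ f y) ∧ (∫ y : ℝ, f y) = 1 ∧ ∀ x, x ≠ t → f x < f t

/-- `f` belongs to the class `𝓕₁` of continuous densities with unique global maximum. -/
def MemF1 (f : ℝ → ℝ) : Prop := ∃ t, IsF1Density f t

/-- `v` is a strict `𝓕₁`-identification function for the mode. -/
def StrictF1Identification (v : ℝ × ℝ → ℝ) : Prop :=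
  Measurable v ∧
  (∀ x : ℝ, ∀ f : ℝ → ℝ, MemF1 f → Integrable (fun y => |v (x, y)| * f y)) ∧
  (∀ f : ℝ → ℝ, ∀ t : ℝ, IsF1Density f t → ∀ x : ℝ,
    (∫ y : ℝ, v (x, y) * f y) = 0 ↔ x = t)

/-! ### Auxiliary construction: the triangular density -/

noncomputable def tri (x : ℝ) : ℝ := max (1 - |x|) 0

lemma tri_eq : tri = Set.indicator (Icc (-1:ℝ) 1) (fun x => 1 - |x|) := by
  funext x
  by_cases h : x ∈ Icc (-1:ℝ) 1
  · rw [Set.indicator_of_mem h, tri, max_eq_left]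
    have : |x| ≤ 1 := abs_le.mpr ⟨h.1, h.2⟩
    linarith
  · rw [Set.indicator_of_notMem h, tri, max_eq_right]
    have : 1 < |x| := by
      rcases lt_or_ge 1 |x| with h1 | h1
      · exact h1
      · exact absurd (abs_le.mp h1) (fun hh => h ⟨hh.1, hh.2⟩)
    linarith

lemma tri_continuous : Continuous tri :=
  (continuous_const.sub continuous_abs).max continuous_const

lemma tri_nonneg (x : ℝ) : 0 ≤ tri x := le_max_right _ _

lemma tri_zero : tri 0 = 1 := by simp [tri]

lemma tri_le_one (x : ℝ) : tri x ≤ 1 := by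
  apply max_le _ (by norm_num)
  have := abs_nonneg x; linarith

lemma tri_lt_one {x : ℝ} (hx : x ≠ 0) : tri x < 1 := by
  apply max_lt _ (by norm_num)
  have : 0 < |x| := abs_pos.mpr hx
  linarith

lemma tri_eq_zero {x : ℝ} (hx : 1 ≤ |x|) : tri x = 0 := by
  rw [tri, max_eq_right]; linarith

lemma tri_integrable : Integrable tri := by
  rw [tri_eq]
  exact (((continuous_const.sub continuous_abs).integrableOn_Icc)).integrable_indicator
    measurableSet_Icc

lemma tri_integral : (∫ x : ℝ, tri x) = 1 := by
  rw [tri_eq, MeasureTheory.integral_indicator measurableSet_Icc,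
    MeasureTheory.integral_Icc_eq_integral_Ioc,
    ← intervalIntegral.integral_of_le (by norm_num : (-1:ℝ) ≤ 1)]
  have h1 : (∫ x in (0:ℝ)..1, (1 - |x|)) = 1/2 := by
    have : (∫ x in (0:ℝ)..1, (1 - |x|)) = ∫ x in (0:ℝ)..1, (1 - x) := by
      apply intervalIntegral.integral_congr
      intro x hx
      rw [Set.uIcc_of_le (by norm_num : (0:ℝ) ≤ 1)] at hx
      simp [abs_of_nonneg hx.1]
    rw [this]
    simp [intervalIntegral.integral_sub intervalIntegrable_const
      intervalIntegral.intervalIntegrable_id, integral_id]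
    norm_num
  have h2 : (∫ x in (-1:ℝ)..0, (1 - |x|)) = 1/2 := by
    have : (∫ x in (-1:ℝ)..0, (1 - |x|)) = ∫ x in (-1:ℝ)..0, (1 + x) := by
      apply intervalIntegral.integral_congr
      intro x hx
      rw [Set.uIcc_of_le (by norm_num : (-1:ℝ) ≤ 0)] at hx
      show 1 - |x| = 1 + x
      rw [abs_of_nonpos hx.2]; ring
    rw [this]
    simp [intervalIntegral.integral_add intervalIntegrable_const
      intervalIntegral.intervalIntegrable_id, integral_id]
    norm_num
  rw [← intervalIntegral.integral_add_adjacent_intervals (a := (-1:ℝ)) (b := 0) (c := 1), h1, h2]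
  · norm_num
  · apply Continuous.intervalIntegrable; continuity
  · apply Continuous.intervalIntegrable; continuity

/-- The first triangular density, with mode `0`. -/
lemma f1_density : IsF1Density tri 0 := by
  refine ⟨tri_continuous, tri_nonneg, tri_integral, fun x hx => ?_⟩
  rw [tri_zero]; exact tri_lt_one hx

/-- The second triangular density, shifted to have mode `3`. -/
lemma f2_density : IsF1Density (fun y => tri (y - 3)) 3 := by
  refine ⟨tri_continuous.comp (continuous_id.sub continuous_const), fun y => tri_nonneg _,
    ?_, fun x hx => ?_⟩
  · rw [MeasureTheory.integral_sub_right_eq_self tri 3]; exact tri_integral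
  · simp only [sub_self, tri_zero]
    exact tri_lt_one (sub_ne_zero.mpr hx)

lemma f2_integrable : Integrable (fun y => tri (y - 3)) :=
  tri_integrable.comp_sub_right 3

/-- The mixture `g = (2/3) f₁ + (1/3) f₂`, which has mode `0`. -/
noncomputable def gmix (y : ℝ) : ℝ := (2/3) * tri y + (1/3) * tri (y - 3)

lemma gmix_density : IsF1Density gmix 0 := by
  have hc : Continuous gmix :=
    (continuous_const.mul tri_continuous).add
      (continuous_const.mul (tri_continuous.comp (continuous_id.sub continuous_const)))
  have hnn : ∀ y, 0 ≤ gmix y := fun y => by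
    have := tri_nonneg y; have := tri_nonneg (y - 3); unfold gmix; positivity
  have hint : (∫ y : ℝ, gmix y) = 1 := by
    unfold gmix
    rw [MeasureTheory.integral_add (tri_integrable.const_mul _) (f2_integrable.const_mul _),
      MeasureTheory.integral_const_mul, MeasureTheory.integral_const_mul,
      MeasureTheory.integral_sub_right_eq_self tri 3, tri_integral]
    norm_num
  have hg0 : gmix 0 = 2/3 := by
    unfold gmix
    rw [tri_zero, tri_eq_zero (by norm_num : (1:ℝ) ≤ |(0:ℝ) - 3|)]
    norm_num
  refine ⟨hc, hnn, hint, fun x hx => ?_⟩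
  rw [hg0]
  by_cases h1 : |x| < 1
  · have h2 : tri (x - 3) = 0 := by
      apply tri_eq_zero
      rw [abs_sub_comm, abs_of_nonneg (by cases abs_lt.mp h1; linarith)]
      cases abs_lt.mp h1; linarith
    have h3 : tri x < 1 := tri_lt_one hx
    unfold gmix; rw [h2]; linarith
  · have h2 : tri x = 0 := tri_eq_zero (le_of_not_gt h1)
    have h3 : tri (x - 3) ≤ 1 := tri_le_one _
    have h4 : 0 ≤ tri (x - 3) := tri_nonneg _
    unfold gmix; rw [h2]; linarith

/-! ### Main theorem -/

/-- 𝓕₁ contains 𝓕₀, and the mode is not identifiable relative to 𝓕₁. -/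
theorem mode_not_identifiable_F1 :
    (∀ f : ℝ → ℝ, MemF0 f → MemF1 f) ∧
    ¬ ∃ v : ℝ × ℝ → ℝ, StrictF1Identification v := by
  constructor
  · rintro f ⟨x₀, hc, hn, hi, _, _, hmax⟩
    exact ⟨x₀, hc, hn, hi, hmax⟩
  · rintro ⟨v, hm, hint, hid⟩
    -- integrability of `y ↦ v (0, y) * f y` for our densities
    have hmeas0 : Measurable (fun y : ℝ => v (0, y)) :=
      hm.comp (measurable_const.prodMk measurable_id)
    have key : ∀ f : ℝ → ℝ, Continuous f → (∀ y, 0 ≤ f y) → MemF1 f →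
        Integrable (fun y : ℝ => v (0, y) * f y) := by
      intro f hcont hnn hmem
      refine (hint 0 f hmem).mono' ((hmeas0.mul hcont.measurable).aestronglyMeasurable) ?_
      filter_upwards with y
      rw [Real.norm_eq_abs, abs_mul, abs_of_nonneg (hnn y)]
    have hf1 := f1_density
    have hf2 := f2_density
    have hg := gmix_density
    have I1 : Integrable (fun y : ℝ => v (0, y) * tri y) :=
      key tri tri_continuous tri_nonneg ⟨0, hf1⟩
    have I2 : Integrable (fun y : ℝ => v (0, y) * tri (y - 3)) :=
      key _ (tri_continuous.comp (continuous_id.sub continuous_const))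
        (fun y => tri_nonneg _) ⟨3, hf2⟩
    -- the three identification equations
    have E1 : (∫ y : ℝ, v (0, y) * tri y) = 0 := (hid tri 0 hf1 0).mpr rfl
    have Eg : (∫ y : ℝ, v (0, y) * gmix y) = 0 := (hid gmix 0 hg 0).mpr rfl
    -- split the mixture integral by linearity
    have split : (∫ y : ℝ, v (0, y) * gmix y)
        = (2/3) * (∫ y : ℝ, v (0, y) * tri y)
          + (1/3) * (∫ y : ℝ, v (0, y) * tri (y - 3)) := by
      have : (fun y : ℝ => v (0, y) * gmix y)
          = fun y : ℝ => (2/3) * (v (0, y) * tri y) + (1/3) * (v (0, y) * tri (y - 3)) := by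
        funext y; unfold gmix; ring
      rw [this, MeasureTheory.integral_add (I1.const_mul _) (I2.const_mul _),
        MeasureTheory.integral_const_mul, MeasureTheory.integral_const_mul]
    have E2 : (∫ y : ℝ, v (0, y) * tri (y - 3)) = 0 := by
      rw [split, E1] at Eg; linarith
    have : (0 : ℝ) = 3 := (hid (fun y => tri (y - 3)) 3 hf2 0).mp E2
    norm_num at this
end
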